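/- (Corollary 3) Let Δ be a total definition. If a justification J over Δ justifies a set L of domain literals, then every two-valued structure of open(Δ) that is consistent with J_L can be extended in a unique way to a model of Δ in which all literals of L are true. -/
import Mathlib


namespace LazyMX

/-- The four truth values: true, false, unknown, inconsistent. -/
inductive TV : Type where
  | t | f | u | i
deriving DecidableEq

namespace TV

/-- The truth order `f <_t u <_t t`, `f <_t i <_t t`. -/
def truthLe (a b : TV) : Prop := a = b ∨ a = f ∨ b = t

/-- The precision order `u <_p t <_p i`, `u <_p f <_p i`. -/
def precLe (a b : TV) : Prop := a = b ∨ a = u ∨ b = i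

/-- The inverse of a truth value. -/
def inv : TV → TV
  | t => f
  | f => t
  | u => u
  | i => i

open Classical in
/-- Greatest lower bound of a set of truth values w.r.t. the truth order. -/
noncomputable def sInf (S : Set TV) : TV :=
  if f ∈ S ∨ (u ∈ S ∧ i ∈ S) then f
  else if u ∈ S then u
  else if i ∈ S then i
  else t

open Classical in
/-- Least upper bound of a set of truth values w.r.t. the truth order. -/
noncomputable def sSup (S : Set TV) : TV :=
  if t ∈ S ∨ (u ∈ S ∧ i ∈ S) then t
  else if u ∈ S then u
  else if i ∈ S then i
  else f

/-- Minimum (meet) of two truth values under the truth order. -/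
noncomputable def tmin (a b : TV) : TV := sInf {a, b}

/-- Maximum (join) of two truth values under the truth order. -/
noncomputable def tmax (a b : TV) : TV := sSup {a, b}

end TV

/-- A (function-free) vocabulary: a type of predicate symbols with arities. -/
structure Voc : Type 1 where
  Pred : Type
  arity : Pred → ℕ

/-- A domain atom `P(d₁,…,dₙ)`. -/
structure Atom (σ : Voc) (D : Type) : Type where
  pred : σ.Pred
  args : Fin (σ.arity pred) → D

/-- A domain literal: an atom or its negation. -/
inductive Lit (σ : Voc) (D : Type) : Type where
  | pos : Atom σ D → Lit σ D
  | neg : Atom σ D → Lit σ D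

namespace Lit
variable {σ : Voc} {D : Type}

def atom : Lit σ D → Atom σ D
  | pos a => a
  | neg a => a

def negate : Lit σ D → Lit σ D
  | pos a => neg a
  | neg a => pos a

def isNeg : Lit σ D → Prop
  | pos _ => False
  | neg _ => True

/-- The truth value a literal asks for: `t` for a positive, `f` for a negative literal. -/
def sign : Lit σ D → TV
  | pos _ => TV.t
  | neg _ => TV.f

end Lit

/-- A four-valued structure with domain `D`: an assignment of truth values to domain atoms. -/
def Struct (σ : Voc) (D : Type) : Type := Atom σ D → TV

variable {σ : Voc} {D : Type}

def TwoValued (I : Struct σ D) : Prop := ∀ a, I a = TV.t ∨ I a = TV.f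

def ThreeValued (I : Struct σ D) : Prop := ∀ a, I a ≠ TV.i

/-- `J` expands `I` (`I ≤_p J` pointwise). -/
def ExpandsS (I J : Struct σ D) : Prop := ∀ a, TV.precLe (I a) (J a)

/-- A set of domain literals is consistent if no atom occurs both positively and negatively. -/
def ConsistentSet (S : Set (Lit σ D)) : Prop := ∀ a, ¬ (Lit.pos a ∈ S ∧ Lit.neg a ∈ S)

open Classical in
/-- The four-valued structure corresponding to a set of domain literals. -/
noncomputable def toStruct (S : Set (Lit σ D)) : Struct σ D := fun a =>
  if Lit.pos a ∈ S then (if Lit.neg a ∈ S then TV.i else TV.t)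
  else (if Lit.neg a ∈ S then TV.f else TV.u)

/-- A literal is true in a structure. -/
def litTrue (I : Struct σ D) : Lit σ D → Prop
  | Lit.pos a => I a = TV.t
  | Lit.neg a => I a = TV.f

/-- A literal is false in a structure. -/
def litFalse (I : Struct σ D) : Lit σ D → Prop
  | Lit.pos a => I a = TV.f
  | Lit.neg a => I a = TV.t

/-- First-order formulas over domain atoms, with quantifiers ranging over explicitly
given subsets of the domain; quantified bodies are represented as `D`-indexed families
(`b d` is the instance `φ[x↦d]`). -/
inductive Formula (σ : Voc) (D : Type) : Type where
  | atom : Atom σ D → Formula σ D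
  | not : Formula σ D → Formula σ D
  | and : Formula σ D → Formula σ D → Formula σ D
  | or : Formula σ D → Formula σ D → Formula σ D
  | all : Set D → (D → Formula σ D) → Formula σ D
  | ex : Set D → (D → Formula σ D) → Formula σ D

/-- The standard four-valued truth assignment. -/
noncomputable def Formula.eval (I : Struct σ D) : Formula σ D → TV
  | Formula.atom a => I a
  | Formula.not φ => (φ.eval I).inv
  | Formula.and φ ψ => TV.tmin (φ.eval I) (ψ.eval I)
  | Formula.or φ ψ => TV.tmax (φ.eval I) (ψ.eval I)
  | Formula.all D' b => TV.sInf { v | ∃ d ∈ D', (b d).eval I = v }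
  | Formula.ex D' b => TV.sSup { v | ∃ d ∈ D', (b d).eval I = v }

/-- The predicate symbols occurring in a formula. -/
def Formula.preds : Formula σ D → Set σ.Pred
  | Formula.atom a => {a.pred}
  | Formula.not φ => φ.preds
  | Formula.and φ ψ => φ.preds ∪ ψ.preds
  | Formula.or φ ψ => φ.preds ∪ ψ.preds
  | Formula.all _ b => ⋃ d, (b d).preds
  | Formula.ex _ b => ⋃ d, (b d).preds

/-- A rule `∀ x̄ ∈ D̄ : P(x̄) ← φ`; `body d̄` is the instantiated body `φ[x̄↦d̄]`. -/
structure Rule (σ : Voc) (D : Type) : Type where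
  head : σ.Pred
  dom : Set (Fin (σ.arity head) → D)
  body : (Fin (σ.arity head) → D) → Formula σ D

/-- A definition: a set of rules. -/
abbrev Defn (σ : Voc) (D : Type) := Set (Rule σ D)

/-- The rule `r` defines the atom `a`. -/
def Rule.defines (r : Rule σ D) (a : Atom σ D) : Prop :=
  ∃ d ∈ r.dom, a = ⟨r.head, d⟩

def definedAtom (Δ : Defn σ D) (a : Atom σ D) : Prop := ∃ r ∈ Δ, r.defines a

def openAtom (Δ : Defn σ D) (a : Atom σ D) : Prop := ¬ definedAtom Δ a

def definedLit (Δ : Defn σ D) (l : Lit σ D) : Prop := definedAtom Δ l.atom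

def openLit (Δ : Defn σ D) (l : Lit σ D) : Prop := ¬ definedAtom Δ l.atom

/-- Each domain atom is defined by at most one rule. -/
def WellFormed (Δ : Defn σ D) : Prop :=
  ∀ a r₁ r₂, r₁ ∈ Δ → r₂ ∈ Δ → r₁.defines a → r₂.defines a → r₁ = r₂

/-- The value of the body of the rule instance defining `a`, evaluated in `I`. -/
noncomputable def bodyVal (Δ : Defn σ D) (I : Struct σ D) (a : Atom σ D) : TV :=
  TV.sSup { v | ∃ r ∈ Δ, ∃ d ∈ r.dom, a = ⟨r.head, d⟩ ∧ (r.body d).eval I = v }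

open Classical in
/-- Combine a lower set `x` and an upper set `y` of defined atoms with an interpretation
`Io` of the open atoms into a four-valued structure. -/
noncomputable def combine (Δ : Defn σ D) (Io : Struct σ D) (x y : Set (Atom σ D)) :
    Struct σ D := fun a =>
  if definedAtom Δ a then
    (if a ∈ x then (if a ∈ y then TV.t else TV.i) else (if a ∈ y then TV.u else TV.f))
  else Io a

/-- Lower component of the four-valued immediate consequence operator. -/
def lowerOp (Δ : Defn σ D) (Io : Struct σ D) (x y : Set (Atom σ D)) : Set (Atom σ D) :=
  { a | definedAtom Δ a ∧
      (bodyVal Δ (combine Δ Io x y) a = TV.t ∨ bodyVal Δ (combine Δ Io x y) a = TV.i) }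

/-- Upper component of the four-valued immediate consequence operator. -/
def upperOp (Δ : Defn σ D) (Io : Struct σ D) (x y : Set (Atom σ D)) : Set (Atom σ D) :=
  { a | definedAtom Δ a ∧
      (bodyVal Δ (combine Δ Io x y) a = TV.t ∨ bodyVal Δ (combine Δ Io x y) a = TV.u) }

/-- Stable revision, lower half: least fixpoint of the lower operator with `y` fixed. -/
def stableLower (Δ : Defn σ D) (Io : Struct σ D) (y : Set (Atom σ D)) : Set (Atom σ D) :=
  ⋂₀ { x | lowerOp Δ Io x y ⊆ x }

/-- Stable revision, upper half: least fixpoint of the upper operator with `x` fixed. -/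
def stableUpper (Δ : Defn σ D) (Io : Struct σ D) (x : Set (Atom σ D)) : Set (Atom σ D) :=
  ⋂₀ { y | upperOp Δ Io x y ⊆ y }

/-- Precision-prefixpoints of the stable revision operator. -/
def wfPrefixpoints (Δ : Defn σ D) (Io : Struct σ D) :
    Set (Set (Atom σ D) × Set (Atom σ D)) :=
  { p | stableLower Δ Io p.2 ⊆ p.1 ∧ p.2 ⊆ stableUpper Δ Io p.1 }

/-- Lower half of the well-founded fixpoint (the precision-least fixpoint of stable revision). -/
def wfLower (Δ : Defn σ D) (Io : Struct σ D) : Set (Atom σ D) :=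
  ⋂₀ (Prod.fst '' wfPrefixpoints Δ Io)

/-- Upper half of the well-founded fixpoint. -/
def wfUpper (Δ : Defn σ D) (Io : Struct σ D) : Set (Atom σ D) :=
  ⋃₀ (Prod.snd '' wfPrefixpoints Δ Io)

/-- The (parametrized) well-founded model `wf_Δ(Io|open(Δ))` of `Δ`; it agrees with `Io`
on the open atoms and is the well-founded fixpoint on the defined atoms. -/
noncomputable def wfModel (Δ : Defn σ D) (Io : Struct σ D) : Struct σ D :=
  combine Δ Io (wfLower Δ Io) (wfUpper Δ Io)

/-- A two-valued structure is a model of the definition `Δ` if it equals the well-founded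
model of `Δ` relative to its restriction to the open atoms. -/
def IsModelOfDef (I : Struct σ D) (Δ : Defn σ D) : Prop :=
  TwoValued I ∧ ∀ a, I a = wfModel Δ I a

/-- `Δ` is total: the well-founded model is two-valued for every two-valued
interpretation of the open atoms. -/
def IsTotalDef (Δ : Defn σ D) : Prop :=
  ∀ Io : Struct σ D, TwoValued Io → TwoValued (wfModel Δ Io)

/-- A model of the canonical theory `{P_t, Δ}`. -/
def IsModelOfTheory (I : Struct σ D) (pt : Atom σ D) (Δ : Defn σ D) : Prop :=
  IsModelOfDef I Δ ∧ I pt = TV.t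

/-- A direct justification for a defined literal `l`: a consistent nonempty set `S` of
domain literals making the body of the rule instance defining `l.atom` true
(for positive `l`) resp. false (for negative `l`). -/
def IsDirectJust (Δ : Defn σ D) (l : Lit σ D) (S : Set (Lit σ D)) : Prop :=
  ConsistentSet S ∧ S.Nonempty ∧
    ∃ r ∈ Δ, ∃ d ∈ r.dom, l.atom = ⟨r.head, d⟩ ∧ (r.body d).eval (toStruct S) = l.sign

/-- A justification over `Δ`: a graph assigning to each literal either no children or a
direct justification. -/
def IsJustification (Δ : Defn σ D) (J : Lit σ D → Set (Lit σ D)) : Prop :=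
  ∀ l, J l = ∅ ∨ IsDirectJust Δ l (J l)

/-- Reachability in the justification graph. -/
def Reach (J : Lit σ D → Set (Lit σ D)) : Lit σ D → Lit σ D → Prop :=
  Relation.ReflTransGen (fun x y => y ∈ J x)

/-- The nodes of the subgraph `J_L` reachable from the set `L` of literals. -/
def reachSet (J : Lit σ D → Set (Lit σ D)) (L : Set (Lit σ D)) : Set (Lit σ D) :=
  { x | ∃ l ∈ L, Reach J l x }

/-- `J` is total for `L`: `J` is defined in every defined literal reachable from `L`. -/
def TotalFor (Δ : Defn σ D) (J : Lit σ D → Set (Lit σ D)) (L : Set (Lit σ D)) : Prop :=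
  ∀ x ∈ reachSet J L, definedLit Δ x → J x ≠ ∅

/-- An infinite path in the subgraph `J_l`. -/
def IsInfPathFrom (J : Lit σ D → Set (Lit σ D)) (l : Lit σ D) (p : ℕ → Lit σ D) : Prop :=
  Reach J l (p 0) ∧ ∀ n, p (n + 1) ∈ J (p n)

/-- `l` is well-founded in `J`: every infinite path in `J_l` is negative. -/
def WellFoundedIn (J : Lit σ D → Set (Lit σ D)) (l : Lit σ D) : Prop :=
  ∀ p : ℕ → Lit σ D, IsInfPathFrom J l p → ∀ n, (p n).isNeg

/-- `J` justifies `L`: `J_L` is total for `L`, every literal of `L` is well-founded,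
and the set of literals in `J_L` is consistent. -/
def Justifies (Δ : Defn σ D) (J : Lit σ D → Set (Lit σ D)) (L : Set (Lit σ D)) : Prop :=
  TotalFor Δ J L ∧ (∀ l ∈ L, WellFoundedIn J l) ∧ ConsistentSet (reachSet J L)

/-- The part of `J` on the nodes `N` is consistent with the literal-set structure `I`:
`I` is consistent and no literal of `N` in which `J` is defined is false in `I`. -/
def ConsistentWithOn (J : Lit σ D → Set (Lit σ D)) (N I : Set (Lit σ D)) : Prop :=
  ConsistentSet I ∧ ∀ l ∈ N, J l ≠ ∅ → l.negate ∉ I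

/-- The predicate symbols occurring in a definition. -/
def vocDef (Δ : Defn σ D) : Set σ.Pred :=
  { P | ∃ r ∈ Δ, r.head = P } ∪ { P | ∃ r ∈ Δ, ∃ d ∈ r.dom, P ∈ (r.body d).preds }

open Classical in
/-- Restriction of a structure to the symbols in `s` (everything else becomes unknown). -/
noncomputable def restrictP (s : Set σ.Pred) (I : Struct σ D) : Struct σ D :=
  fun a => if a.pred ∈ s then I a else TV.u

open Classical in
/-- Restriction of a structure to a set of atoms (everything else becomes unknown). -/
noncomputable def restrictA (A : Set (Atom σ D)) (I : Struct σ D) : Struct σ D :=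
  fun a => if a ∈ A then I a else TV.u

/-- Strong `s`-equivalence of two classes of models: each model of one, restricted to `s`,
expands in a unique way to a model of the other. -/
def StronglyEquivModels (s : Set σ.Pred) (M M' : Set (Struct σ D)) : Prop :=
  (∀ I ∈ M, ∃! I', I' ∈ M' ∧ ExpandsS (restrictP s I) I') ∧
  (∀ I' ∈ M', ∃! I, I ∈ M ∧ ExpandsS (restrictP s I') I)

/-- Strong `s`-equivalence of two definitions. -/
def StronglyEquivDef (s : Set σ.Pred) (Δ₁ Δ₂ : Defn σ D) : Prop :=
  StronglyEquivModels s { I | IsModelOfDef I Δ₁ } { I | IsModelOfDef I Δ₂ }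

/-- A (two-valued) structure expands a literal-set structure. -/
def expandsLit (Iin : Set (Lit σ D)) (M : Struct σ D) : Prop := ∀ l ∈ Iin, litTrue M l

/-- Strong `s`-equivalence of two definitions in the input structure `Iin`. -/
def StronglyEquivDefIn (s : Set σ.Pred) (Iin : Set (Lit σ D)) (Δ₁ Δ₂ : Defn σ D) : Prop :=
  StronglyEquivModels s { I | IsModelOfDef I Δ₁ ∧ expandsLit Iin I }
    { I | IsModelOfDef I Δ₂ ∧ expandsLit Iin I }

/-- The domain atom of a 0-ary predicate symbol. -/
def ptAtom (σ : Voc) (D : Type) (Pt : σ.Pred) (h : σ.arity Pt = 0) : Atom σ D :=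
  ⟨Pt, fun j => Fin.elim0 (h ▸ j)⟩

/-- An acceptable state `⟨Δg, Δd, J, I⟩` for the canonical theory `{P_t, Δ}` with input
structure `Iin`. -/
structure AcceptableState (Δ : Defn σ D) (Iin : Set (Lit σ D))
    (Δg Δd : Defn σ D) (J : Lit σ D → Set (Lit σ D)) (I : Set (Lit σ D)) : Prop where
  wf_gd : WellFormed (Δg ∪ Δd)
  wf_g : WellFormed Δg
  wf_d : WellFormed Δd
  total_gd : IsTotalDef (Δg ∪ Δd)
  total_g : IsTotalDef Δg
  total_d : IsTotalDef Δd
  equiv : StronglyEquivDef (vocDef Δ) (Δg ∪ Δd) Δ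
  disj : ∀ a, ¬ (definedAtom Δg a ∧ definedAtom Δd a)
  just : IsJustification (Δg ∪ Δd) J
  expands : Iin ⊆ I
  justified : Justifies (Δg ∪ Δd) J { l | l ∈ I ∧ definedLit Δd l }
  consistentWith : ConsistentWithOn J (reachSet J { l | l ∈ I ∧ definedLit Δd l }) I

/-- A default acceptable state. -/
structure DefaultAcceptableState (Δ : Defn σ D) (Iin : Set (Lit σ D))
    (Δg Δd : Defn σ D) (J : Lit σ D → Set (Lit σ D)) (I : Set (Lit σ D))
    extends AcceptableState Δ Iin Δg Δd J I : Prop where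
  dj_open_or_defd : ∀ l l', l' ∈ J l → openLit (Δg ∪ Δd) l' ∨ definedLit Δd l'
  justifies_defined : Justifies (Δg ∪ Δd) J { l | J l ≠ ∅ }

/-- A model of a theory (list of sentences plus a definition) relative to a vocabulary `s`:
two-valued on `s`, unknown outside `s`, satisfying all sentences and the definition. -/
def IsModelOfTOn (s : Set σ.Pred) (M : Struct σ D) (φs : List (Formula σ D))
    (Δ : Defn σ D) : Prop :=
  (∀ a : Atom σ D, a.pred ∈ s → M a = TV.t ∨ M a = TV.f) ∧
  (∀ a : Atom σ D, a.pred ∉ s → M a = TV.u) ∧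
  (∀ φ ∈ φs, φ.eval M = TV.t) ∧
  (∀ a : Atom σ D, a.pred ∈ s → M a = wfModel Δ M a)

/-- A model of a canonical theory `{pt, Δ}` relative to a vocabulary `s`. -/
def IsModelOfCanonOn (s : Set σ.Pred) (M : Struct σ D) (pt : Atom σ D)
    (Δ : Defn σ D) : Prop :=
  (∀ a : Atom σ D, a.pred ∈ s → M a = TV.t ∨ M a = TV.f) ∧
  (∀ a : Atom σ D, a.pred ∉ s → M a = TV.u) ∧
  M pt = TV.t ∧
  (∀ a : Atom σ D, a.pred ∈ s → M a = wfModel Δ M a)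

/-- A model of a definition relative to a vocabulary `s`: two-valued on `s`,
unknown outside `s`, and satisfying the well-founded-model equation on `s`. -/
def IsModelOfDefOn (s : Set σ.Pred) (I : Struct σ D) (Δ : Defn σ D) : Prop :=
  (∀ a : Atom σ D, a.pred ∈ s → I a = TV.t ∨ I a = TV.f) ∧
  (∀ a : Atom σ D, a.pred ∉ s → I a = TV.u) ∧
  (∀ a : Atom σ D, a.pred ∈ s → I a = wfModel Δ I a)


section Aux

variable {σ : Voc} {D : Type}

namespace TV

lemma precLe_refl (a : TV) : TV.precLe a a := Or.inl rfl
lemma precLe_u (b : TV) : TV.precLe TV.u b := Or.inr (Or.inl rfl)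
lemma precLe_i (a : TV) : TV.precLe a TV.i := Or.inr (Or.inr rfl)

lemma ti_closed {v w : TV} (h : TV.precLe v w) (hv : v = TV.t ∨ v = TV.i) :
    w = TV.t ∨ w = TV.i := by
  rcases h with rfl | rfl | rfl
  · exact hv
  · rcases hv with h | h <;> cases h
  · exact Or.inr rfl

lemma tu_closed {v w : TV} (h : TV.precLe v w) (hw : w = TV.t ∨ w = TV.u) :
    v = TV.t ∨ v = TV.u := by
  rcases h with rfl | rfl | rfl
  · exact hw
  · exact Or.inr rfl
  · rcases hw with h | h <;> cases h

lemma fi_closed {v w : TV} (h : TV.precLe v w) (hv : v = TV.f ∨ v = TV.i) :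
    w = TV.f ∨ w = TV.i := by
  rcases h with rfl | rfl | rfl
  · exact hv
  · rcases hv with h | h <;> cases h
  · exact Or.inr rfl

lemma inv_mono {v w : TV} (h : TV.precLe v w) : TV.precLe v.inv w.inv := by
  rcases h with rfl | rfl | rfl
  · exact precLe_refl _
  · exact precLe_u _
  · exact precLe_i _

lemma sInf_spec (S : Set TV) :
    (TV.sInf S = TV.f ∧ (TV.f ∈ S ∨ (TV.u ∈ S ∧ TV.i ∈ S))) ∨
    (TV.sInf S = TV.u ∧ TV.u ∈ S ∧ TV.f ∉ S ∧ TV.i ∉ S) ∨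
    (TV.sInf S = TV.i ∧ TV.i ∈ S ∧ TV.f ∉ S ∧ TV.u ∉ S) ∨
    (TV.sInf S = TV.t ∧ TV.f ∉ S ∧ TV.u ∉ S ∧ TV.i ∉ S) := by
  unfold TV.sInf
  split_ifs with h1 h2 h3
  · exact Or.inl ⟨rfl, h1⟩
  · exact Or.inr (Or.inl ⟨rfl, h2, fun h => h1 (Or.inl h), fun h => h1 (Or.inr ⟨h2, h⟩)⟩)
  · exact Or.inr (Or.inr (Or.inl ⟨rfl, h3, fun h => h1 (Or.inl h), h2⟩))
  · exact Or.inr (Or.inr (Or.inr ⟨rfl, fun h => h1 (Or.inl h), h2, h3⟩))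

lemma sSup_spec (S : Set TV) :
    (TV.sSup S = TV.t ∧ (TV.t ∈ S ∨ (TV.u ∈ S ∧ TV.i ∈ S))) ∨
    (TV.sSup S = TV.u ∧ TV.u ∈ S ∧ TV.t ∉ S ∧ TV.i ∉ S) ∨
    (TV.sSup S = TV.i ∧ TV.i ∈ S ∧ TV.t ∉ S ∧ TV.u ∉ S) ∨
    (TV.sSup S = TV.f ∧ TV.t ∉ S ∧ TV.u ∉ S ∧ TV.i ∉ S) := by
  unfold TV.sSup
  split_ifs with h1 h2 h3
  · exact Or.inl ⟨rfl, h1⟩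
  · exact Or.inr (Or.inl ⟨rfl, h2, fun h => h1 (Or.inl h), fun h => h1 (Or.inr ⟨h2, h⟩)⟩)
  · exact Or.inr (Or.inr (Or.inl ⟨rfl, h3, fun h => h1 (Or.inl h), h2⟩))
  · exact Or.inr (Or.inr (Or.inr ⟨rfl, fun h => h1 (Or.inl h), h2, h3⟩))

lemma sInf_precLe {S S' : Set TV}
    (h1 : ∀ v ∈ S, ∃ w ∈ S', TV.precLe v w)
    (h2 : ∀ w ∈ S', ∃ v ∈ S, TV.precLe v w) :
    TV.precLe (TV.sInf S) (TV.sInf S') := by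
  have key1 : TV.f ∈ S → TV.f ∈ S' ∨ TV.i ∈ S' := by
    intro h; obtain ⟨w, hw, hle⟩ := h1 _ h
    rcases hle with rfl | h' | rfl
    · exact Or.inl hw
    · cases h'
    · exact Or.inr hw
  have key2 : TV.i ∈ S → TV.i ∈ S' := by
    intro h; obtain ⟨w, hw, hle⟩ := h1 _ h
    rcases hle with rfl | h' | rfl
    · exact hw
    · cases h'
    · exact hw
  have key3 : TV.f ∈ S' → TV.f ∈ S ∨ TV.u ∈ S := by
    intro h; obtain ⟨v, hv, hle⟩ := h2 _ h
    rcases hle with rfl | rfl | h'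
    · exact Or.inl hv
    · exact Or.inr hv
    · cases h'
  have key4 : TV.u ∈ S' → TV.u ∈ S := by
    intro h; obtain ⟨v, hv, hle⟩ := h2 _ h
    rcases hle with rfl | rfl | h'
    · exact hv
    · exact hv
    · cases h'
  rcases sInf_spec S with ⟨e, hc⟩ | ⟨e, hc1, hc2, hc3⟩ | ⟨e, hc1, hc2, hc3⟩ | ⟨e, hc1, hc2, hc3⟩ <;>
    rcases sInf_spec S' with ⟨e', hc'⟩ | ⟨e', hc1', hc2', hc3'⟩ | ⟨e', hc1', hc2', hc3'⟩ |
      ⟨e', hc1', hc2', hc3'⟩ <;> rw [e, e']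
  · exact precLe_refl _
  · exfalso
    rcases hc with h | ⟨_, hi⟩
    · rcases key1 h with h' | h' <;> [exact hc2' h'; exact hc3' h']
    · exact hc3' (key2 hi)
  · exact precLe_i _
  · exfalso
    rcases hc with h | ⟨_, hi⟩
    · rcases key1 h with h' | h' <;> [exact hc1' h'; exact hc3' h']
    · exact hc3' (key2 hi)
  · exact precLe_u _
  · exact precLe_u _
  · exact precLe_u _
  · exact precLe_u _
  · exfalso
    rcases hc' with h | ⟨hu, _⟩
    · rcases key3 h with h' | h' <;> [exact hc2 h'; exact hc3 h']
    · exact hc3 (key4 hu)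
  · exact absurd (key4 hc1') hc3
  · exact precLe_refl _
  · exact absurd (key2 hc1) hc3'
  · exfalso
    rcases hc' with h | ⟨hu, _⟩
    · rcases key3 h with h' | h' <;> [exact hc1 h'; exact hc2 h']
    · exact hc2 (key4 hu)
  · exact absurd (key4 hc1') hc2
  · exact precLe_i _
  · exact precLe_refl _

lemma sSup_precLe {S S' : Set TV}
    (h1 : ∀ v ∈ S, ∃ w ∈ S', TV.precLe v w)
    (h2 : ∀ w ∈ S', ∃ v ∈ S, TV.precLe v w) :
    TV.precLe (TV.sSup S) (TV.sSup S') := by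
  have key1 : TV.t ∈ S → TV.t ∈ S' ∨ TV.i ∈ S' := by
    intro h; obtain ⟨w, hw, hle⟩ := h1 _ h
    rcases hle with rfl | h' | rfl
    · exact Or.inl hw
    · cases h'
    · exact Or.inr hw
  have key2 : TV.i ∈ S → TV.i ∈ S' := by
    intro h; obtain ⟨w, hw, hle⟩ := h1 _ h
    rcases hle with rfl | h' | rfl
    · exact hw
    · cases h'
    · exact hw
  have key3 : TV.t ∈ S' → TV.t ∈ S ∨ TV.u ∈ S := by
    intro h; obtain ⟨v, hv, hle⟩ := h2 _ h
    rcases hle with rfl | rfl | h'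
    · exact Or.inl hv
    · exact Or.inr hv
    · cases h'
  have key4 : TV.u ∈ S' → TV.u ∈ S := by
    intro h; obtain ⟨v, hv, hle⟩ := h2 _ h
    rcases hle with rfl | rfl | h'
    · exact hv
    · exact hv
    · cases h'
  rcases sSup_spec S with ⟨e, hc⟩ | ⟨e, hc1, hc2, hc3⟩ | ⟨e, hc1, hc2, hc3⟩ | ⟨e, hc1, hc2, hc3⟩ <;>
    rcases sSup_spec S' with ⟨e', hc'⟩ | ⟨e', hc1', hc2', hc3'⟩ | ⟨e', hc1', hc2', hc3'⟩ |
      ⟨e', hc1', hc2', hc3'⟩ <;> rw [e, e']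
  · exact precLe_refl _
  · exfalso
    rcases hc with h | ⟨_, hi⟩
    · rcases key1 h with h' | h' <;> [exact hc2' h'; exact hc3' h']
    · exact hc3' (key2 hi)
  · exact precLe_i _
  · exfalso
    rcases hc with h | ⟨_, hi⟩
    · rcases key1 h with h' | h' <;> [exact hc1' h'; exact hc3' h']
    · exact hc3' (key2 hi)
  · exact precLe_u _
  · exact precLe_u _
  · exact precLe_u _
  · exact precLe_u _
  · exfalso
    rcases hc' with h | ⟨hu, _⟩
    · rcases key3 h with h' | h' <;> [exact hc2 h'; exact hc3 h']
    · exact hc3 (key4 hu)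
  · exact absurd (key4 hc1') hc3
  · exact precLe_refl _
  · exact absurd (key2 hc1) hc3'
  · exfalso
    rcases hc' with h | ⟨hu, _⟩
    · rcases key3 h with h' | h' <;> [exact hc1 h'; exact hc2 h']
    · exact hc2 (key4 hu)
  · exact absurd (key4 hc1') hc2
  · exact precLe_i _
  · exact precLe_refl _

lemma sSup_singleton (v : TV) : TV.sSup {v} = v := by
  cases v <;> simp [TV.sSup, Set.mem_singleton_iff]

end TV

lemma tmin_precLe {a b a' b' : TV} (h1 : TV.precLe a a') (h2 : TV.precLe b b') :
    TV.precLe (TV.tmin a b) (TV.tmin a' b') := by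
  apply TV.sInf_precLe
  · intro v hv
    simp only [Set.mem_insert_iff, Set.mem_singleton_iff] at hv
    rcases hv with rfl | rfl
    · exact ⟨a', by simp, h1⟩
    · exact ⟨b', by simp, h2⟩
  · intro w hw
    simp only [Set.mem_insert_iff, Set.mem_singleton_iff] at hw
    rcases hw with rfl | rfl
    · exact ⟨a, by simp, h1⟩
    · exact ⟨b, by simp, h2⟩

lemma tmax_precLe {a b a' b' : TV} (h1 : TV.precLe a a') (h2 : TV.precLe b b') :
    TV.precLe (TV.tmax a b) (TV.tmax a' b') := by
  apply TV.sSup_precLe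
  · intro v hv
    simp only [Set.mem_insert_iff, Set.mem_singleton_iff] at hv
    rcases hv with rfl | rfl
    · exact ⟨a', by simp, h1⟩
    · exact ⟨b', by simp, h2⟩
  · intro w hw
    simp only [Set.mem_insert_iff, Set.mem_singleton_iff] at hw
    rcases hw with rfl | rfl
    · exact ⟨a, by simp, h1⟩
    · exact ⟨b, by simp, h2⟩

lemma eval_precLe {I I' : Struct σ D} (h : ∀ a, TV.precLe (I a) (I' a)) :
    ∀ φ : Formula σ D, TV.precLe (φ.eval I) (φ.eval I') := by
  intro φ
  induction φ with
  | atom a => exact h a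
  | not φ ih => exact TV.inv_mono ih
  | and φ ψ ih1 ih2 => exact tmin_precLe ih1 ih2
  | or φ ψ ih1 ih2 => exact tmax_precLe ih1 ih2
  | all D' b ih =>
    apply TV.sInf_precLe
    · rintro v ⟨d, hd, rfl⟩; exact ⟨_, ⟨d, hd, rfl⟩, ih d⟩
    · rintro w ⟨d, hd, rfl⟩; exact ⟨_, ⟨d, hd, rfl⟩, ih d⟩
  | ex D' b ih =>
    apply TV.sSup_precLe
    · rintro v ⟨d, hd, rfl⟩; exact ⟨_, ⟨d, hd, rfl⟩, ih d⟩
    · rintro w ⟨d, hd, rfl⟩; exact ⟨_, ⟨d, hd, rfl⟩, ih d⟩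

lemma toStruct_precLe {S : Set (Lit σ D)} (hS : ConsistentSet S) {I : Struct σ D}
    (hpos : ∀ a, Lit.pos a ∈ S → I a = TV.t ∨ I a = TV.i)
    (hneg : ∀ a, Lit.neg a ∈ S → I a = TV.f ∨ I a = TV.i) :
    ∀ a, TV.precLe (toStruct S a) (I a) := by
  intro a
  unfold toStruct
  split_ifs with h1 h2 h3
  · exact absurd ⟨h1, h2⟩ (hS a)
  · rcases hpos a h1 with h | h <;> rw [h]
    · exact TV.precLe_refl _
    · exact TV.precLe_i _
  · rcases hneg a h3 with h | h <;> rw [h]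
    · exact TV.precLe_refl _
    · exact TV.precLe_i _
  · exact TV.precLe_u _

lemma bodyVal_precLe {Δ : Defn σ D} {I I' : Struct σ D}
    (h : ∀ a, TV.precLe (I a) (I' a)) (a : Atom σ D) :
    TV.precLe (bodyVal Δ I a) (bodyVal Δ I' a) := by
  apply TV.sSup_precLe
  · rintro v ⟨r, hr, d, hd, ha, rfl⟩
    exact ⟨_, ⟨r, hr, d, hd, ha, rfl⟩, eval_precLe h _⟩
  · rintro w ⟨r, hr, d, hd, ha, rfl⟩
    exact ⟨_, ⟨r, hr, d, hd, ha, rfl⟩, eval_precLe h _⟩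

lemma bodyVal_eq {Δ : Defn σ D} (hΔ : WellFormed Δ) {r : Rule σ D}
    {d : Fin (σ.arity r.head) → D} {a : Atom σ D}
    (hr : r ∈ Δ) (hd : d ∈ r.dom) (ha : a = ⟨r.head, d⟩) (I : Struct σ D) :
    bodyVal Δ I a = (r.body d).eval I := by
  have hset : {v | ∃ r' ∈ Δ, ∃ d' ∈ r'.dom, a = ⟨r'.head, d'⟩ ∧ (r'.body d').eval I = v}
      = {(r.body d).eval I} := by
    ext v
    simp only [Set.mem_setOf_eq, Set.mem_singleton_iff]
    constructor
    · rintro ⟨r', hr', d', hd', ha', rfl⟩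
      have hrr : r' = r := hΔ a r' r hr' hr ⟨d', hd', ha'⟩ ⟨d, hd, ha⟩
      subst hrr
      have h2 : (⟨r'.head, d'⟩ : Atom σ D) = ⟨r'.head, d⟩ := ha'.symm.trans ha
      rw [Atom.mk.injEq] at h2
      rw [eq_of_heq h2.2]
    · rintro rfl; exact ⟨r, hr, d, hd, ha, rfl⟩
  unfold bodyVal
  rw [hset, TV.sSup_singleton]

open Classical in
lemma combine_defined {Δ : Defn σ D} {Io : Struct σ D} {x y : Set (Atom σ D)}
    {a : Atom σ D} (h : definedAtom Δ a) :
    combine Δ Io x y a =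
      if a ∈ x then (if a ∈ y then TV.t else TV.i) else (if a ∈ y then TV.u else TV.f) := by
  unfold combine; rw [if_pos h]

lemma combine_open {Δ : Defn σ D} {Io : Struct σ D} {x y : Set (Atom σ D)}
    {a : Atom σ D} (h : ¬ definedAtom Δ a) :
    combine Δ Io x y a = Io a := by
  unfold combine; rw [if_neg h]

lemma combine_precLe {Δ : Defn σ D} {Io : Struct σ D} {x x' y y' : Set (Atom σ D)}
    (hx : x ⊆ x') (hy : y' ⊆ y) (a : Atom σ D) :
    TV.precLe (combine Δ Io x y a) (combine Δ Io x' y' a) := by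
  by_cases h : definedAtom Δ a
  · rw [combine_defined h, combine_defined h]
    by_cases h1 : a ∈ x
    · rw [if_pos h1, if_pos (hx h1)]
      by_cases h2 : a ∈ y'
      · rw [if_pos h2, if_pos (hy h2)]; exact TV.precLe_refl _
      · rw [if_neg h2]; exact TV.precLe_i _
    · rw [if_neg h1]
      by_cases h2 : a ∈ y
      · rw [if_pos h2]; exact TV.precLe_u _
      · have h2' : a ∉ y' := fun hh => h2 (hy hh)
        rw [if_neg h2, if_neg h2', if_neg h2']
        split_ifs
        · exact TV.precLe_i _
        · exact TV.precLe_refl _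
  · rw [combine_open h, combine_open h]; exact TV.precLe_refl _

lemma combine_congr {Δ : Defn σ D} {Io Io' : Struct σ D}
    (h : ∀ a, ¬ definedAtom Δ a → Io a = Io' a) (x y : Set (Atom σ D)) :
    combine Δ Io x y = combine Δ Io' x y := by
  funext a
  unfold combine
  by_cases hd : definedAtom Δ a
  · rw [if_pos hd, if_pos hd]
  · rw [if_neg hd, if_neg hd]
    exact h a hd

variable {Δ : Defn σ D} {Io : Struct σ D} {x x' y y' : Set (Atom σ D)}

lemma lowerOp_mono (hx : x ⊆ x') (hy : y' ⊆ y) :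
    lowerOp Δ Io x y ⊆ lowerOp Δ Io x' y' := by
  rintro a ⟨hdef, hv⟩
  exact ⟨hdef, TV.ti_closed (bodyVal_precLe (combine_precLe hx hy) a) hv⟩

lemma upperOp_anti (hx : x ⊆ x') (hy : y' ⊆ y) :
    upperOp Δ Io x' y' ⊆ upperOp Δ Io x y := by
  rintro a ⟨hdef, hv⟩
  exact ⟨hdef, TV.tu_closed (bodyVal_precLe (combine_precLe hx hy) a) hv⟩

lemma stableLower_le (h : lowerOp Δ Io x y ⊆ x) : stableLower Δ Io y ⊆ x :=
  Set.sInter_subset_of_mem h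

lemma stableLower_prefix : lowerOp Δ Io (stableLower Δ Io y) y ⊆ stableLower Δ Io y := by
  intro a ha
  apply Set.mem_sInter.2
  intro x hx
  exact hx (lowerOp_mono (stableLower_le hx) (subset_refl y) ha)

lemma stableLower_postfix : stableLower Δ Io y ⊆ lowerOp Δ Io (stableLower Δ Io y) y :=
  stableLower_le (lowerOp_mono stableLower_prefix (subset_refl y))

lemma stableLower_anti (h : y' ⊆ y) : stableLower Δ Io y ⊆ stableLower Δ Io y' :=
  stableLower_le (subset_trans (lowerOp_mono (subset_refl _) h) stableLower_prefix)

lemma stableUpper_le (h : upperOp Δ Io x y ⊆ y) : stableUpper Δ Io x ⊆ y :=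
  Set.sInter_subset_of_mem h

lemma stableUpper_prefix : upperOp Δ Io x (stableUpper Δ Io x) ⊆ stableUpper Δ Io x := by
  intro a ha
  apply Set.mem_sInter.2
  intro y hy
  exact hy (upperOp_anti (subset_refl x) (stableUpper_le hy) ha)

lemma stableUpper_postfix : stableUpper Δ Io x ⊆ upperOp Δ Io x (stableUpper Δ Io x) :=
  stableUpper_le (upperOp_anti (subset_refl x) stableUpper_prefix)

lemma stableUpper_anti (h : x ⊆ x') : stableUpper Δ Io x' ⊆ stableUpper Δ Io x :=
  stableUpper_le (subset_trans (upperOp_anti h (subset_refl _)) stableUpper_prefix)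

lemma wfLower_le {p : Set (Atom σ D) × Set (Atom σ D)} (hp : p ∈ wfPrefixpoints Δ Io) :
    wfLower Δ Io ⊆ p.1 :=
  Set.sInter_subset_of_mem ⟨p, hp, rfl⟩

lemma le_wfUpper {p : Set (Atom σ D) × Set (Atom σ D)} (hp : p ∈ wfPrefixpoints Δ Io) :
    p.2 ⊆ wfUpper Δ Io :=
  Set.subset_sUnion_of_mem ⟨p, hp, rfl⟩

lemma wf_mem : (wfLower Δ Io, wfUpper Δ Io) ∈ wfPrefixpoints Δ Io := by
  constructor
  · intro a ha
    apply Set.mem_sInter.2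
    rintro s ⟨p, hp, rfl⟩
    exact hp.1 (stableLower_anti (le_wfUpper hp) ha)
  · rintro a ⟨s, ⟨p, hp, rfl⟩, ha⟩
    exact stableUpper_anti (wfLower_le hp) (hp.2 ha)

lemma wf_fix : wfLower Δ Io = stableLower Δ Io (wfUpper Δ Io) ∧
    wfUpper Δ Io = stableUpper Δ Io (wfLower Δ Io) := by
  have hmem := wf_mem (Δ := Δ) (Io := Io)
  have hp2 : ((stableLower Δ Io (wfUpper Δ Io)), (stableUpper Δ Io (wfLower Δ Io)))
      ∈ wfPrefixpoints Δ Io := by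
    constructor
    · exact stableLower_anti hmem.2
    · exact stableUpper_anti hmem.1
  constructor
  · exact Set.Subset.antisymm (wfLower_le hp2) hmem.1
  · exact Set.Subset.antisymm hmem.2 (le_wfUpper hp2)

lemma wfLower_defined : wfLower Δ Io ⊆ {a | definedAtom Δ a} := by
  have hp : (({a | definedAtom Δ a}, (∅ : Set (Atom σ D)))) ∈ wfPrefixpoints Δ Io := by
    constructor
    · exact stableLower_le (fun a ha => ha.1)
    · exact Set.empty_subset _
  exact wfLower_le hp

lemma wfUpper_defined : wfUpper Δ Io ⊆ {a | definedAtom Δ a} := by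
  rintro a ⟨s, ⟨p, hp, rfl⟩, ha⟩
  exact stableUpper_le (fun b hb => hb.1) (hp.2 ha)

lemma wfPrefixpoints_congr {Io' : Struct σ D} (h : ∀ a, ¬ definedAtom Δ a → Io a = Io' a) :
    wfPrefixpoints Δ Io = wfPrefixpoints Δ Io' := by
  have hl : ∀ x y, lowerOp Δ Io x y = lowerOp Δ Io' x y := by
    intro x y; unfold lowerOp; rw [combine_congr h]
  have hu : ∀ x y, upperOp Δ Io x y = upperOp Δ Io' x y := by
    intro x y; unfold upperOp; rw [combine_congr h]
  have hsl : ∀ y, stableLower Δ Io y = stableLower Δ Io' y := by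
    intro y; unfold stableLower; simp only [hl]
  have hsu : ∀ x, stableUpper Δ Io x = stableUpper Δ Io' x := by
    intro x; unfold stableUpper; simp only [hu]
  unfold wfPrefixpoints
  simp only [hsl, hsu]

lemma wfModel_congr {Io' : Struct σ D} (h : ∀ a, ¬ definedAtom Δ a → Io a = Io' a) :
    wfModel Δ Io = wfModel Δ Io' := by
  have hp := wfPrefixpoints_congr h
  have h1 : wfLower Δ Io = wfLower Δ Io' := by unfold wfLower; rw [hp]
  have h2 : wfUpper Δ Io = wfUpper Δ Io' := by unfold wfUpper; rw [hp]
  unfold wfModel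
  rw [h1, h2, combine_congr h]

end Aux

/-- Corollary 3: for a total definition `Δ`, if `J` justifies `L`, then
every two-valued structure of `open(Δ)` that is consistent with `J_L` extends in a
unique way to a model of `Δ` satisfying all literals of `L`. -/
theorem total_unique_extension (σ : Voc) (D : Type) [Nonempty D]
    (Δ : Defn σ D) (hΔ : WellFormed Δ) (htot : IsTotalDef Δ)
    (J : Lit σ D → Set (Lit σ D)) (hJ : IsJustification Δ J)
    (L : Set (Lit σ D)) (hjust : Justifies Δ J L)
    (Io : Struct σ D)
    (hIo₂ : ∀ a, openAtom Δ a → Io a = TV.t ∨ Io a = TV.f)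
    (hIoᵤ : ∀ a, definedAtom Δ a → Io a = TV.u)
    (hcons : ∀ x ∈ reachSet J L, ¬ litFalse Io x) :
    ∃! M : Struct σ D, IsModelOfDef M Δ ∧ ExpandsS Io M ∧ ∀ l ∈ L, litTrue M l := by
  classical
  obtain ⟨htotal, hwfL, hconsR⟩ := hjust
  -- the reachable set is closed under the justification graph
  have hRclosed : ∀ l ∈ reachSet J L, ∀ l' ∈ J l, l' ∈ reachSet J L := by
    rintro l ⟨l0, hl0, hreach⟩ l' hl'
    exact ⟨l0, hl0, hreach.tail hl'⟩
  have hLsub : L ⊆ reachSet J L := fun l hl => ⟨l, hl, Relation.ReflTransGen.refl⟩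
  -- open literals in the reachable set are true in Io
  have hopenT : ∀ a, ¬ definedAtom Δ a → Lit.pos a ∈ reachSet J L → Io a = TV.t := by
    intro a hopen ha
    rcases hIo₂ a hopen with h | h
    · exact h
    · exact absurd h (hcons _ ha)
  have hopenF : ∀ a, ¬ definedAtom Δ a → Lit.neg a ∈ reachSet J L → Io a = TV.f := by
    intro a hopen ha
    rcases hIo₂ a hopen with h | h
    · exact absurd h (hcons _ ha)
    · exact h
  -- a two-valued completion of Io
  set Io₂ : Struct σ D := fun a => if definedAtom Δ a then TV.t else Io a with hIo₂def
  have hIo₂agree : ∀ a, ¬ definedAtom Δ a → Io a = Io₂ a := by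
    intro a h; simp [hIo₂def, h]
  have hIo₂tv : TwoValued Io₂ := by
    intro a; by_cases h : definedAtom Δ a
    · left; simp [hIo₂def, h]
    · simpa [hIo₂def, h] using hIo₂ a h
  have hMtv : TwoValued (wfModel Δ Io₂) := htot Io₂ hIo₂tv
  have hAdef : wfLower Δ Io₂ ⊆ {a | definedAtom Δ a} := wfLower_defined
  have hBdef : wfUpper Δ Io₂ ⊆ {a | definedAtom Δ a} := wfUpper_defined
  -- lower and upper halves coincide
  have hAB : wfLower Δ Io₂ = wfUpper Δ Io₂ := by
    ext a
    constructor
    · intro ha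
      by_contra hb
      have hdef : definedAtom Δ a := hAdef ha
      have hi : wfModel Δ Io₂ a = TV.i := by
        unfold wfModel
        rw [combine_defined hdef, if_pos ha, if_neg hb]
      rcases hMtv a with h | h <;> rw [hi] at h <;> cases h
    · intro hb
      by_contra ha
      have hdef : definedAtom Δ a := hBdef hb
      have hu : wfModel Δ Io₂ a = TV.u := by
        unfold wfModel
        rw [combine_defined hdef, if_neg ha, if_pos hb]
      rcases hMtv a with h | h <;> rw [hu] at h <;> cases h
  have hsl : wfLower Δ Io₂ = stableLower Δ Io₂ (wfLower Δ Io₂) := by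
    conv_lhs => rw [wf_fix.1, ← hAB]
  have hsu : wfLower Δ Io₂ = stableUpper Δ Io₂ (wfLower Δ Io₂) := by
    conv_lhs => rw [hAB, wf_fix.2]
  -- the model as a combination over T := wfLower Δ Io₂
  have hMc : wfModel Δ Io₂ = combine Δ Io₂ (wfLower Δ Io₂) (wfLower Δ Io₂) := by
    unfold wfModel; rw [← hAB]
  have hTL : lowerOp Δ Io₂ (wfLower Δ Io₂) (wfLower Δ Io₂) = wfLower Δ Io₂ := by
    apply Set.Subset.antisymm
    · have h1 := stableLower_prefix (Δ := Δ) (Io := Io₂) (y := wfLower Δ Io₂)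
      rw [← hsl] at h1; exact h1
    · have h2 := stableLower_postfix (Δ := Δ) (Io := Io₂) (y := wfLower Δ Io₂)
      rw [← hsl] at h2; exact h2
  have hTU : upperOp Δ Io₂ (wfLower Δ Io₂) (wfLower Δ Io₂) = wfLower Δ Io₂ := by
    apply Set.Subset.antisymm
    · have h1 := stableUpper_prefix (Δ := Δ) (Io := Io₂) (x := wfLower Δ Io₂)
      rw [← hsu] at h1; exact h1
    · have h2 := stableUpper_postfix (Δ := Δ) (Io := Io₂) (x := wfLower Δ Io₂)
      rw [← hsu] at h2; exact h2
  have hUmin : ∀ y, upperOp Δ Io₂ (wfLower Δ Io₂) y ⊆ y → wfLower Δ Io₂ ⊆ y := by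
    intro y h
    have := stableUpper_le h
    rw [← hsu] at this; exact this
  -- values of the model
  have hMdefT : ∀ a, definedAtom Δ a → a ∈ wfLower Δ Io₂ → wfModel Δ Io₂ a = TV.t := by
    intro a h ha
    rw [hMc, combine_defined h, if_pos ha, if_pos ha]
  have hMdefF : ∀ a, definedAtom Δ a → a ∉ wfLower Δ Io₂ → wfModel Δ Io₂ a = TV.f := by
    intro a h ha
    rw [hMc, combine_defined h, if_neg ha, if_neg ha]
  have hMopen : ∀ a, ¬ definedAtom Δ a → wfModel Δ Io₂ a = Io a := by
    intro a h
    rw [hMc, combine_open h]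
    exact (hIo₂agree a h).symm
  -- direct justifications of defined reachable literals
  have hdj : ∀ l ∈ reachSet J L, definedAtom Δ l.atom → IsDirectJust Δ l (J l) := by
    intro l hl hd
    rcases hJ l with h | h
    · exact absurd h (htotal l hl hd)
    · exact h
  -- bad literals propagate
  have hstep : ∀ l ∈ reachSet J L, definedAtom Δ l.atom → ¬ litTrue (wfModel Δ Io₂) l →
      ∃ l', l' ∈ J l ∧ l' ∈ reachSet J L ∧
        definedAtom Δ l'.atom ∧ ¬ litTrue (wfModel Δ Io₂) l' := by
    intro l hlR hld hlf
    by_contra hex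
    push_neg at hex
    obtain ⟨hSc, hSne, r, hr, d, hd, ha, heval⟩ := hdj l hlR hld
    have hall : ∀ b, TV.precLe (toStruct (J l) b) (wfModel Δ Io₂ b) := by
      apply toStruct_precLe hSc
      · intro b hb
        have hbR : Lit.pos b ∈ reachSet J L := hRclosed l hlR _ hb
        by_cases hbd : definedAtom Δ b
        · by_cases hbA : b ∈ wfLower Δ Io₂
          · exact Or.inl (hMdefT b hbd hbA)
          · exfalso
            have ht : wfModel Δ Io₂ b = TV.t := hex _ hb hbR hbd
            rw [hMdefF b hbd hbA] at ht; cases ht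
        · exact Or.inl ((hMopen b hbd).trans (hopenT b hbd hbR))
      · intro b hb
        have hbR : Lit.neg b ∈ reachSet J L := hRclosed l hlR _ hb
        by_cases hbd : definedAtom Δ b
        · by_cases hbA : b ∈ wfLower Δ Io₂
          · exfalso
            have ht : wfModel Δ Io₂ b = TV.f := hex _ hb hbR hbd
            rw [hMdefT b hbd hbA] at ht; cases ht
          · exact Or.inl (hMdefF b hbd hbA)
        · exact Or.inl ((hMopen b hbd).trans (hopenF b hbd hbR))
    have hev := eval_precLe hall (r.body d)
    cases l with
    | pos a =>
      have ha' : a = ⟨r.head, d⟩ := ha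
      have hbv : bodyVal Δ (wfModel Δ Io₂) a = (r.body d).eval (wfModel Δ Io₂) :=
        bodyVal_eq hΔ hr hd ha' _
      have hld' : definedAtom Δ a := hld
      have h2 : (r.body d).eval (wfModel Δ Io₂) = TV.t ∨
          (r.body d).eval (wfModel Δ Io₂) = TV.i :=
        TV.ti_closed hev (Or.inl heval)
      have hmem : a ∈ lowerOp Δ Io₂ (wfLower Δ Io₂) (wfLower Δ Io₂) := by
        refine ⟨hld', ?_⟩
        rw [← hMc, hbv]
        exact h2
      rw [hTL] at hmem
      exact hlf (hMdefT a hld' hmem)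
    | neg a =>
      have ha' : a = ⟨r.head, d⟩ := ha
      have hbv : bodyVal Δ (wfModel Δ Io₂) a = (r.body d).eval (wfModel Δ Io₂) :=
        bodyVal_eq hΔ hr hd ha' _
      have hld' : definedAtom Δ a := hld
      have h2 : (r.body d).eval (wfModel Δ Io₂) = TV.f ∨
          (r.body d).eval (wfModel Δ Io₂) = TV.i :=
        TV.fi_closed hev (Or.inl heval)
      have hmemA : a ∈ wfLower Δ Io₂ := by
        by_contra hA
        exact hlf (hMdefF a hld' hA)
      rw [← hTU] at hmemA
      obtain ⟨_, h3⟩ := hmemA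
      rw [← hMc, hbv] at h3
      rcases h3 with h3 | h3 <;> rcases h2 with h4 | h4 <;> rw [h3] at h4 <;> cases h4
  -- positive reachable defined literals are in the lower fixpoint
  have hposT : ∀ a, Lit.pos a ∈ reachSet J L → definedAtom Δ a → a ∈ wfLower Δ Io₂ := by
    intro a haR hadef
    by_contra haA
    have hbad0 : definedAtom Δ (Lit.pos a).atom ∧ ¬ litTrue (wfModel Δ Io₂) (Lit.pos a) := by
      refine ⟨hadef, ?_⟩
      intro ht
      have := hMdefF a hadef haA
      rw [ht] at this; cases this
    have hchoice : ∀ x : {l : Lit σ D // l ∈ reachSet J L ∧ definedAtom Δ l.atom ∧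
        ¬ litTrue (wfModel Δ Io₂) l},
        ∃ l', l' ∈ J x.1 ∧ l' ∈ reachSet J L ∧ definedAtom Δ l'.atom ∧
          ¬ litTrue (wfModel Δ Io₂) l' :=
      fun x => hstep x.1 x.2.1 x.2.2.1 x.2.2.2
    choose g hg1 hg2 hg3 hg4 using hchoice
    let g' : {l : Lit σ D // l ∈ reachSet J L ∧ definedAtom Δ l.atom ∧
        ¬ litTrue (wfModel Δ Io₂) l} → {l : Lit σ D // l ∈ reachSet J L ∧
        definedAtom Δ l.atom ∧ ¬ litTrue (wfModel Δ Io₂) l} :=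
      fun x => ⟨g x, hg2 x, hg3 x, hg4 x⟩
    let f : ℕ → {l : Lit σ D // l ∈ reachSet J L ∧ definedAtom Δ l.atom ∧
        ¬ litTrue (wfModel Δ Io₂) l} :=
      fun n => g'^[n] ⟨Lit.pos a, haR, hbad0⟩
    have hf0 : (f 0).1 = Lit.pos a := rfl
    have hfs : ∀ n, (f (n + 1)).1 ∈ J (f n).1 := by
      intro n
      have hit : f (n + 1) = g' (f n) := Function.iterate_succ_apply' g' n _
      rw [hit]
      exact hg1 (f n)
    obtain ⟨l0, hl0, hreach⟩ := haR
    have hpath : IsInfPathFrom J l0 (fun n => (f n).1) := by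
      constructor
      · exact hreach
      · exact hfs
    have hneg : (Lit.pos a).isNeg := hwfL l0 hl0 _ hpath 0
    exact hneg
  -- negative reachable literals are outside the fixpoint
  have hnegF : ∀ a, Lit.neg a ∈ reachSet J L → a ∉ wfLower Δ Io₂ := by
    intro a haR haA
    have hclosed : upperOp Δ Io₂ (wfLower Δ Io₂)
        (wfLower Δ Io₂ \ {c | Lit.neg c ∈ reachSet J L}) ⊆
        wfLower Δ Io₂ \ {c | Lit.neg c ∈ reachSet J L} := by
      rintro c ⟨hcd, hcv⟩
      have hcA : c ∈ wfLower Δ Io₂ := by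
        have hsub : upperOp Δ Io₂ (wfLower Δ Io₂)
            (wfLower Δ Io₂ \ {c | Lit.neg c ∈ reachSet J L}) ⊆
            upperOp Δ Io₂ (wfLower Δ Io₂) (wfLower Δ Io₂) :=
          upperOp_anti (subset_refl _) Set.diff_subset
        have := hsub ⟨hcd, hcv⟩
        rw [hTU] at this; exact this
      refine ⟨hcA, ?_⟩
      intro hcN
      obtain ⟨hSc, hSne, r, hr, d, hd, hca, heval⟩ := hdj (Lit.neg c) hcN hcd
      have hall : ∀ b, TV.precLe (toStruct (J (Lit.neg c)) b)
          (combine Δ Io₂ (wfLower Δ Io₂)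
            (wfLower Δ Io₂ \ {c | Lit.neg c ∈ reachSet J L}) b) := by
        apply toStruct_precLe hSc
        · intro b hb
          have hbR : Lit.pos b ∈ reachSet J L := hRclosed _ hcN _ hb
          by_cases hbd : definedAtom Δ b
          · have hbA : b ∈ wfLower Δ Io₂ := hposT b hbR hbd
            rw [combine_defined hbd, if_pos hbA]
            by_cases h1 : b ∈ wfLower Δ Io₂ \ {c | Lit.neg c ∈ reachSet J L}
            · rw [if_pos h1]; exact Or.inl rfl
            · rw [if_neg h1]; exact Or.inr rfl
          · rw [combine_open hbd, ← hIo₂agree b hbd]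
            exact Or.inl (hopenT b hbd hbR)
        · intro b hb
          have hbR : Lit.neg b ∈ reachSet J L := hRclosed _ hcN _ hb
          by_cases hbd : definedAtom Δ b
          · have hbN : b ∉ wfLower Δ Io₂ \ {c | Lit.neg c ∈ reachSet J L} :=
              fun hh => hh.2 hbR
            rw [combine_defined hbd, if_neg hbN, if_neg hbN]
            by_cases h1 : b ∈ wfLower Δ Io₂
            · rw [if_pos h1]; exact Or.inr rfl
            · rw [if_neg h1]; exact Or.inl rfl
          · rw [combine_open hbd, ← hIo₂agree b hbd]
            exact Or.inl (hopenF b hbd hbR)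
      have hev := eval_precLe hall (r.body d)
      have h2 := TV.fi_closed hev (Or.inl heval)
      have hca' : c = ⟨r.head, d⟩ := hca
      rw [bodyVal_eq hΔ hr hd hca'] at hcv
      rcases hcv with h3 | h3 <;> rcases h2 with h4 | h4 <;> rw [h3] at h4 <;> cases h4
    have := hUmin _ hclosed
    exact (this haA).2 haR
  -- the model
  refine ⟨wfModel Δ Io₂, ⟨⟨hMtv, ?_⟩, ?_, ?_⟩, ?_⟩
  · -- fixpoint equation
    intro a
    have hcg : wfModel Δ (wfModel Δ Io₂) = wfModel Δ Io₂ := by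
      apply wfModel_congr
      intro b hb
      rw [hMopen b hb]
      exact hIo₂agree b hb
    rw [hcg]
  · -- expansion
    intro a
    by_cases h : definedAtom Δ a
    · rw [hIoᵤ a h]; exact TV.precLe_u _
    · rw [hMopen a h]; exact TV.precLe_refl _
  · -- literals of L are true
    intro l hl
    have hlR : l ∈ reachSet J L := hLsub hl
    cases l with
    | pos a =>
      by_cases h : definedAtom Δ a
      · exact hMdefT a h (hposT a hlR h)
      · show wfModel Δ Io₂ a = TV.t
        rw [hMopen a h]
        exact hopenT a h hlR
    | neg a =>
      by_cases h : definedAtom Δ a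
      · exact hMdefF a h (hnegF a hlR)
      · show wfModel Δ Io₂ a = TV.f
        rw [hMopen a h]
        exact hopenF a h hlR
  · -- uniqueness
    rintro M' ⟨hM'model, hM'exp, -⟩
    have hagree : ∀ a, ¬ definedAtom Δ a → M' a = Io₂ a := by
      intro a h
      have h1 := hM'exp a
      have h2 : M' a = Io a := by
        rcases h1 with h1 | h1 | h1
        · exact h1.symm
        · rcases hIo₂ a h with h3 | h3 <;> rw [h1] at h3 <;> cases h3
        · rcases hM'model.1 a with h3 | h3 <;> rw [h1] at h3 <;> cases h3
      rw [h2]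
      exact hIo₂agree a h
    have hcg : wfModel Δ M' = wfModel Δ Io₂ := wfModel_congr hagree
    funext a
    rw [hM'model.2 a, hcg]

end LazyMX
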